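/- For k ≥ n ≥ 0, the number of paths from (0,0) to (n,k) in the lattice L*_CS equals Σ_{m=0}^{n} f*_m · [x^{n-m}] S(x)^{k-n}, where f*_m counts paths to (m,m) in L*_CS and S(x) is the large Schröder generating function. -/

import Mathlib

open Finset PowerSeries

/-- Large Schröder numbers. -/
def schroeder : ℕ → ℕ
  | 0 => 1
  | n + 1 => schroeder n + ∑ i : Fin (n + 1), schroeder i * schroeder (n - i)

/-- The points visited by a path (a list of steps) starting at (0,0). -/
def pts (l : List (ℤ × ℤ)) : List (ℤ × ℤ) :=
  l.scanl (fun p s => (p.1 + s.1, p.2 + s.2)) (0, 0)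

/-- The endpoint of a path starting at (0,0). -/
def endPt (l : List (ℤ × ℤ)) : ℤ × ℤ :=
  ((l.map Prod.fst).sum, (l.map Prod.snd).sum)

/-- All steps are unit steps (1,0) or (0,1). -/
def unitSteps (l : List (ℤ × ℤ)) : Prop := ∀ s ∈ l, s = (1, 0) ∨ s = (0, 1)

/-- All steps are (1,0), (0,1) or (1,1). -/
def schSteps (l : List (ℤ × ℤ)) : Prop := ∀ s ∈ l, s = (1, 0) ∨ s = (0, 1) ∨ s = (1, 1)

/-- The path stays weakly below the diagonal y = x. -/
def weaklyBelow (l : List (ℤ × ℤ)) : Prop := ∀ p ∈ pts l, p.2 ≤ p.1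

/-- The path stays strictly below the diagonal except at its start (0,0). -/
def strictBelowAfterStart (l : List (ℤ × ℤ)) : Prop :=
  ∀ p ∈ pts l, p ≠ (0, 0) → p.2 < p.1

/-- Validity of a path starting at point `p` in a lattice where steps (1,0) and (0,1)
are allowed everywhere and the diagonal step (1,1) is allowed exactly from points
satisfying `D`. -/
def okFrom (D : ℤ × ℤ → Prop) : ℤ × ℤ → List (ℤ × ℤ) → Prop
  | _, [] => True
  | p, s :: l => (s = (1, 0) ∨ s = (0, 1) ∨ (s = (1, 1) ∧ D p)) ∧
      okFrom D (p.1 + s.1, p.2 + s.2) l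

/-- Paths from (0,0) to (n,k) in the Catalan–Schröder lattice L_CS:
diagonal steps allowed from points (a,b) with b ≥ a. -/
def LCS (n k : ℕ) : Set (List (ℤ × ℤ)) :=
  {l | okFrom (fun p => p.1 ≤ p.2) (0, 0) l ∧ endPt l = ((n : ℤ), (k : ℤ))}

/-- Paths from (0,0) to (n,k) in the lattice L*_CS:
diagonal steps allowed only from points (a,b) with b > a. -/
def LCSstar (n k : ℕ) : Set (List (ℤ × ℤ)) :=
  {l | okFrom (fun p => p.1 < p.2) (0, 0) l ∧ endPt l = ((n : ℤ), (k : ℤ))}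

/-- Weakly subdiagonal unit-step paths from (0,0) to (n,k). -/
def CPath (n k : ℕ) : Set (List (ℤ × ℤ)) :=
  {l | unitSteps l ∧ endPt l = ((n : ℤ), (k : ℤ)) ∧ weaklyBelow l}

/-- Weakly subdiagonal paths from (0,0) to (n,k) with steps (1,0),(0,1),(1,1). -/
def SPath (n k : ℕ) : Set (List (ℤ × ℤ)) :=
  {l | schSteps l ∧ endPt l = ((n : ℤ), (k : ℤ)) ∧ weaklyBelow l}

/-- Number of paths from (0,0) to (n,n) in L_CS. -/
noncomputable def fCS (n : ℕ) : ℕ := Nat.card ↥(LCS n n)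

/-- Number of paths from (0,0) to (n,n) in L*_CS. -/
noncomputable def fCSstar (n : ℕ) : ℕ := Nat.card ↥(LCSstar n n)

/-- Generating function of the Catalan numbers. -/
noncomputable def catalanGF : PowerSeries ℤ := PowerSeries.mk fun n => (catalan n : ℤ)

/-- Generating function of the large Schröder numbers. -/
noncomputable def schroederGF : PowerSeries ℤ := PowerSeries.mk fun n => (schroeder n : ℤ)

/-- Generating function F(x) of diagonal path counts in L_CS. -/
noncomputable def FGF : PowerSeries ℤ := PowerSeries.mk fun n => (fCS n : ℤ)

/-- Generating function F*(x) of diagonal path counts in L*_CS. -/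
noncomputable def FstarGF : PowerSeries ℤ := PowerSeries.mk fun n => (fCSstar n : ℤ)

/-- Substitution x ↦ x² in a formal power series: g(x²). -/
noncomputable def subSq (g : PowerSeries ℤ) : PowerSeries ℤ :=
  PowerSeries.mk fun n => if 2 ∣ n then PowerSeries.coeff (n / 2) g else 0

/-- Substitution x ↦ x³ in a formal power series: g(x³). -/
noncomputable def subCube (g : PowerSeries ℤ) : PowerSeries ℤ :=
  PowerSeries.mk fun n => if 3 ∣ n then PowerSeries.coeff (n / 3) g else 0

/-!
Let `A(a, b)` be the number of `L*_CS` paths to `(a, b)`. Sorting paths by their last step gives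
`A(a, b) = A(a-1, b) + A(a, b-1) + [a < b] A(a-1, b-1)`, and `A(0, k) = 1`.
Multiplying the Schröder equation `S = 1 + x S + x S²` by `F*(x) S(x)^d` shows that
`c(n, d) = [x^n] F*(x) S(x)^d` satisfies `c(n+1, d+1) = c(n, d+2) + c(n+1, d) + c(n, d+1)`,
which is the recurrence of `A(n, n + d)` strictly above the diagonal, with `c(n, 0) = f*_n` and
`c(0, d) = 1`. Hence `A(n, n + d) = c(n, d)`, and expanding the product gives the stated sum.
-/

def AllowedStep (D : ℤ × ℤ → Prop) (p s : ℤ × ℤ) : Prop :=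
  s = (1, 0) ∨ s = (0, 1) ∨ (s = (1, 1) ∧ D p)

theorem AllowedStep.pos {D : ℤ × ℤ → Prop} {p s : ℤ × ℤ} (h : AllowedStep D p s) :
    0 < s := by
  rcases h with rfl | rfl | ⟨rfl, -⟩ <;> simp [Prod.lt_iff]

section okFrom

variable {D : ℤ × ℤ → Prop}

theorem okFrom_cons {p s : ℤ × ℤ} {l : List (ℤ × ℤ)} :
    okFrom D p (s :: l) ↔ AllowedStep D p s ∧ okFrom D (p + s) l := Iff.rfl

theorem okFrom_append {p : ℤ × ℤ} {l₁ l₂ : List (ℤ × ℤ)} :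
    okFrom D p (l₁ ++ l₂) ↔ okFrom D p l₁ ∧ okFrom D (p + l₁.sum) l₂ := by
  induction l₁ generalizing p with
  | nil => simp [okFrom]
  | cons s l ih =>
    simp only [List.cons_append, okFrom_cons, ih, List.sum_cons, add_assoc, and_assoc]

theorem okFrom_concat {p s : ℤ × ℤ} {l : List (ℤ × ℤ)} :
    okFrom D p (l ++ [s]) ↔ okFrom D p l ∧ AllowedStep D (p + l.sum) s := by
  simp [okFrom_append, okFrom, AllowedStep]

theorem okFrom.sum_nonneg {p : ℤ × ℤ} {l : List (ℤ × ℤ)} (h : okFrom D p l) :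
    0 ≤ l.sum := by
  induction l generalizing p with
  | nil => exact le_rfl (a := (0 : ℤ × ℤ))
  | cons s l ih =>
    obtain ⟨hs, hl⟩ := okFrom_cons.1 h
    rw [List.sum_cons]
    exact add_nonneg hs.pos.le (ih hl)

end okFrom

-- Endpoints range over all of `ℤ × ℤ`, so removing a last step never leaves the index set.
def latticePaths (D : ℤ × ℤ → Prop) (q : ℤ × ℤ) : Set (List (ℤ × ℤ)) :=
  {l | okFrom D 0 l ∧ l.sum = q}

section latticePaths

variable {D : ℤ × ℤ → Prop}

theorem endPt_eq_sum (l : List (ℤ × ℤ)) : endPt l = l.sum := by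
  induction l with
  | nil => rfl
  | cons s l ih => rw [List.sum_cons, ← ih]; rfl

theorem LCSstar_eq_latticePaths (n k : ℕ) :
    LCSstar n k = latticePaths (fun p => p.1 < p.2) ((n : ℤ), (k : ℤ)) := by
  simp only [LCSstar, latticePaths, endPt_eq_sum, Prod.mk_zero_zero]

theorem concat_mem_latticePaths {q s : ℤ × ℤ} {l : List (ℤ × ℤ)} :
    l ++ [s] ∈ latticePaths D q ↔ l ∈ latticePaths D (q - s) ∧ AllowedStep D (q - s) s := by
  simp only [latticePaths, Set.mem_ofPred_eq, okFrom_concat, zero_add, List.sum_append,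
    List.sum_singleton, eq_sub_iff_add_eq]
  constructor
  · rintro ⟨⟨hl, hs⟩, rfl⟩; simp_all
  · rintro ⟨⟨hl, rfl⟩, hs⟩; simp_all

theorem latticePaths_eq_empty {q : ℤ × ℤ} (hq : ¬0 ≤ q) : latticePaths D q = ∅ :=
  Set.eq_empty_of_forall_notMem fun _ ⟨hl, hsum⟩ => hq (hsum ▸ hl.sum_nonneg)

theorem latticePaths_zero : latticePaths D 0 = {[]} := by
  ext l
  rcases l.eq_nil_or_concat' with rfl | ⟨t, s, rfl⟩
  · simp [latticePaths, okFrom]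
  · simp only [concat_mem_latticePaths, Set.mem_singleton_iff, List.concat_ne_nil, iff_false]
    rintro ⟨ht, hs⟩
    rw [latticePaths_eq_empty (by simpa using hs.pos.not_ge)] at ht
    exact ht

theorem latticePaths_eq_union {q : ℤ × ℤ} (hq : q ≠ 0) :
    latticePaths D q =
      (· ++ [(1, 0)]) '' latticePaths D (q - (1, 0)) ∪
      (· ++ [(0, 1)]) '' latticePaths D (q - (0, 1)) ∪
      (· ++ [(1, 1)]) '' {l ∈ latticePaths D (q - (1, 1)) | D (q - (1, 1))} := by
  ext l
  rcases l.eq_nil_or_concat' with rfl | ⟨t, s, rfl⟩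
  · simp [latticePaths, Ne.symm hq]
  · simp only [concat_mem_latticePaths, AllowedStep, Set.mem_union, Set.mem_image,
      List.append_singleton_inj, existsAndEq, true_and, Set.mem_ofPred_eq]
    constructor
    · rintro ⟨ht, rfl | rfl | ⟨rfl, hD⟩⟩ <;> simp_all
    · rintro ((⟨ht, rfl⟩ | ⟨ht, rfl⟩) | ⟨⟨ht, hD⟩, rfl⟩) <;> simp_all

theorem latticePaths_finite (q : ℤ × ℤ) : (latticePaths D q).Finite := by
  induction hN : (q.1 + q.2).toNat using Nat.strong_induction_on generalizing q with
  | _ N ih =>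
    by_cases hq0 : q = 0
    · simp [hq0, latticePaths_zero]
    by_cases hq : 0 ≤ q
    · have hlt : ∀ s : ℤ × ℤ, 0 < s → ((q - s).1 + (q - s).2).toNat < N := by
        intro s hs
        have hq0' : q.1 ≠ 0 ∨ q.2 ≠ 0 := by contrapose! hq0; exact Prod.ext hq0.1 hq0.2
        simp only [Prod.lt_iff, Prod.le_def, Prod.fst_zero, Prod.snd_zero] at hs hq
        simp only [Prod.fst_sub, Prod.snd_sub]
        omega
      rw [latticePaths_eq_union hq0]
      refine (((ih _ (hlt _ ?_) _ rfl).image _).union ((ih _ (hlt _ ?_) _ rfl).image _)).union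
        (((ih _ (hlt _ ?_) _ rfl).sep _).image _) <;> simp [Prod.lt_iff]
    · simp [latticePaths_eq_empty hq]

instance (q : ℤ × ℤ) : Finite (latticePaths D q) := (latticePaths_finite q).to_subtype

theorem ncard_latticePaths {q : ℤ × ℤ} (hq : q ≠ 0) :
    (latticePaths D q).ncard =
      (latticePaths D (q - (1, 0))).ncard + (latticePaths D (q - (0, 1))).ncard +
        {l ∈ latticePaths D (q - (1, 1)) | D (q - (1, 1))}.ncard := by
  have disjoint {x y : ℤ × ℤ} (hxy : x ≠ y) (S T : Set (List (ℤ × ℤ))) :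
      Disjoint ((· ++ [x]) '' S) ((· ++ [y]) '' T) := by
    simp [Set.disjoint_left, hxy.symm]
  have inj (s : ℤ × ℤ) : Function.Injective (· ++ [s]) := List.append_left_injective [s]
  rw [latticePaths_eq_union hq,
    Set.ncard_union_eq (Set.disjoint_union_left.2
      ⟨disjoint (by decide) _ _, disjoint (by decide) _ _⟩),
    Set.ncard_union_eq (disjoint (by decide) _ _), Set.ncard_image_of_injective _ (inj _),
    Set.ncard_image_of_injective _ (inj _), Set.ncard_image_of_injective _ (inj _)]

end latticePaths

theorem card_LCSstar (n k : ℕ) :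
    Nat.card (LCSstar n k) = (latticePaths (fun p => p.1 < p.2) ((n : ℤ), (k : ℤ))).ncard := by
  rw [LCSstar_eq_latticePaths, Nat.card_coe_set_eq]

theorem card_LCSstar_zero_left (k : ℕ) : Nat.card (LCSstar 0 k) = 1 := by
  induction k with
  | zero =>
    rw [card_LCSstar, Nat.cast_zero, ← Prod.zero_eq_mk, latticePaths_zero, Set.ncard_singleton]
  | succ k ih =>
    rw [card_LCSstar, ncard_latticePaths (by simp [Prod.ext_iff]; omega),
      latticePaths_eq_empty (q := _ - (1, 0)), latticePaths_eq_empty (q := _ - (1, 1))]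
    · rw [card_LCSstar] at ih
      simpa using ih
    all_goals simp [Prod.le_def]

theorem card_LCSstar_succ_succ {n k : ℕ} (h : n < k) :
    Nat.card (LCSstar (n + 1) (k + 1)) =
      Nat.card (LCSstar n (k + 1)) + Nat.card (LCSstar (n + 1) k) + Nat.card (LCSstar n k) := by
  simp only [card_LCSstar]
  rw [ncard_latticePaths (by simp [Prod.ext_iff]; omega)]
  simp [h]

theorem schroederGF_eq : schroederGF = 1 + X * schroederGF + X * schroederGF ^ 2 := by
  ext (_ | n)
  · simp [schroederGF, schroeder]
  · rw [map_add, map_add, coeff_succ_X_mul, coeff_succ_X_mul, coeff_one, if_neg n.succ_ne_zero,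
      pow_two, coeff_mul, Nat.sum_antidiagonal_eq_sum_range_succ_mk]
    simp only [schroederGF, coeff_mk, schroeder, Nat.cast_add, Nat.cast_sum, Nat.cast_mul,
      Fin.sum_univ_eq_sum_range (fun i => (schroeder i : ℤ) * schroeder (n - i)), zero_add]

theorem constantCoeff_schroederGF : constantCoeff schroederGF = 1 := by
  simp [schroederGF, schroeder]

theorem schroederGF_pow_succ (d : ℕ) :
    schroederGF ^ (d + 1) =
      schroederGF ^ d + X * schroederGF ^ (d + 1) + X * schroederGF ^ (d + 2) :=
  calc schroederGF ^ (d + 1) = schroederGF ^ d * schroederGF := pow_succ _ _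
    _ = schroederGF ^ d * (1 + X * schroederGF + X * schroederGF ^ 2) := by
      rw [← schroederGF_eq]
    _ = _ := by ring

theorem coeff_succ_mul_schroederGF_pow_succ (F : PowerSeries ℤ) (n d : ℕ) :
    coeff (n + 1) (F * schroederGF ^ (d + 1)) =
      coeff (n + 1) (F * schroederGF ^ d) + coeff n (F * schroederGF ^ (d + 1)) +
        coeff n (F * schroederGF ^ (d + 2)) := by
  conv_lhs => rw [schroederGF_pow_succ]
  rw [mul_add, mul_add, mul_left_comm F X, mul_left_comm F X, map_add, map_add,
    coeff_succ_X_mul, coeff_succ_X_mul]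

theorem card_LCSstar_add (n d : ℕ) :
    (Nat.card (LCSstar n (n + d)) : ℤ) = coeff n (FstarGF * schroederGF ^ d) := by
  induction n generalizing d with
  | zero =>
    have h0 : fCSstar 0 = 1 := card_LCSstar_zero_left 0
    rw [zero_add, card_LCSstar_zero_left]
    simp [FstarGF, h0, constantCoeff_schroederGF]
  | succ n ih =>
    induction d with
    | zero => simp [FstarGF, fCSstar]
    | succ d ihd =>
      rw [coeff_succ_mul_schroederGF_pow_succ, ← ih, ← ih, ← ihd,
        show n + 1 + (d + 1) = n + 1 + d + 1 by ring, card_LCSstar_succ_succ (by omega),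
        show n + (d + 2) = n + 1 + d + 1 by ring, show n + (d + 1) = n + 1 + d by ring]
      push_cast
      ring

/-- for k ≥ n, the number of paths to (n,k) in L*_CS equals
Σ_{m=0}^{n} f*_m · [x^{n-m}] S(x)^{k-n}. -/
theorem LCSstar_count (n k : ℕ) (h : n ≤ k) :
    (Nat.card ↥(LCSstar n k) : ℤ) =
      ∑ m ∈ Finset.range (n + 1),
        (fCSstar m : ℤ) * PowerSeries.coeff (n - m) (schroederGF ^ (k - n)) := by
  obtain ⟨d, rfl⟩ := Nat.exists_eq_add_of_le h
  rw [card_LCSstar_add, Nat.add_sub_cancel_left, coeff_mul,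
    Nat.sum_antidiagonal_eq_sum_range_succ fun i j => coeff i FstarGF * coeff j (schroederGF ^ d)]
  simp [FstarGF]
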